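/- arXiv:1210.6568 — 2 statements merged into one kernel-verified Lean document; each statement's English description precedes it below -/
import Mathlib

section
/- Let G be an equitably k-colorable graph on n vertices with k dividing n, and let H be a (k−1)-partite graph. Then for every l ≥ 1, χ_=(G ∘^l H) ≤ k. -/
open SimpleGraph Finset

/-- The corona `G ∘ H` of two graphs: one copy of `G` and `|V(G)|` copies of `H`,
the `i`-th vertex of `G` being joined to every vertex of the `i`-th copy of `H`. -/
def SimpleGraph.corona {α β : Type*} (G : SimpleGraph α) (H : SimpleGraph β) :
    SimpleGraph (α ⊕ α × β) where
  Adj x y :=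
    match x, y with
    | Sum.inl u, Sum.inl v => G.Adj u v
    | Sum.inl u, Sum.inr (v, _) => u = v
    | Sum.inr (u, _), Sum.inl v => u = v
    | Sum.inr (u, a), Sum.inr (v, b) => u = v ∧ H.Adj a b
  symm := by
    constructor
    rintro (u | ⟨u, a⟩) (v | ⟨v, b⟩) h
    · exact h.symm
    · exact h.symm
    · exact h.symm
    · exact ⟨h.1.symm, h.2.symm⟩
  loopless := by
    constructor
    rintro (u | ⟨u, a⟩) h
    · exact G.loopless.irrefl u h
    · exact H.loopless.irrefl a h.2

universe u

/-- Vertex type of the `l`-fold corona `G ∘^l H` (with `l = 0` giving `G` itself). -/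
def coronaType (α β : Type u) : ℕ → Type u
  | 0 => α
  | l + 1 => coronaType α β l ⊕ coronaType α β l × β

instance coronaType.fintype (α β : Type u) [Fintype α] [Fintype β] :
    ∀ l, Fintype (coronaType α β l)
  | 0 => inferInstanceAs (Fintype α)
  | l + 1 =>
    letI := coronaType.fintype α β l
    inferInstanceAs (Fintype (coronaType α β l ⊕ coronaType α β l × β))

/-- The `l`-fold corona `G ∘^l H`, defined by `G ∘^0 H = G` and
`G ∘^(l+1) H = (G ∘^l H) ∘ H`. -/
def coronaPow {α β : Type u} (G : SimpleGraph α) (H : SimpleGraph β) :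
    ∀ l, SimpleGraph (coronaType α β l)
  | 0 => G
  | l + 1 => (coronaPow G H l).corona H

/-- The canonical copy of a vertex of `G` inside `G ∘^l H`. -/
def coronaBase {α : Type u} (β : Type u) : ∀ l, α → coronaType α β l
  | 0 => id
  | l + 1 => fun a => Sum.inl (coronaBase β l a)

/-- `c` is an equitable `k`-coloring of `G`: it is proper and any two color classes
differ in size by at most one. -/
def SimpleGraph.IsEquitableColoring {V : Type*} [Fintype V] (G : SimpleGraph V) {k : ℕ}
    (c : V → Fin k) : Prop :=
  (∀ ⦃u v⦄, G.Adj u v → c u ≠ c v) ∧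
    ∀ i j : Fin k,
      (Finset.univ.filter fun v => c v = i).card ≤
        (Finset.univ.filter fun v => c v = j).card + 1

/-- `G` is equitably `k`-colorable. -/
def SimpleGraph.EquitablyColorable {V : Type*} [Fintype V] (G : SimpleGraph V) (k : ℕ) : Prop :=
  ∃ c : V → Fin k, G.IsEquitableColoring c

/-- The equitable chromatic number: the least `k` such that `G` is equitably `k`-colorable. -/
noncomputable def SimpleGraph.equitableChromaticNumber {V : Type*} [Fintype V]
    (G : SimpleGraph V) : ℕ :=
  sInf {k | G.EquitablyColorable k}

/-- The maximum degree of a finite graph (no decidability assumptions). -/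
noncomputable def SimpleGraph.maxDeg {V : Type*} [Fintype V] (G : SimpleGraph V) : ℕ :=
  Finset.univ.sup fun v => (G.neighborSet v).ncard

/-! In an equitable `k`-coloring with `k ∣ |V(G)|` all color classes have the same size `s`. Read
the colors as elements of `ℤ/k`, color `H` with the `k - 1` nonzero residues, and give the vertex
`(v, b)` of the copy of `H` at `v` the color `c v + d b`. Since `d b ≠ 0` this is proper, and for
fixed `b` the vertices `(v, b)` of color `a` are those with `c v = a - d b`, a class of size `s`.
So every class of the corona has size `(|V(H)| + 1) s`, and the construction iterates. -/

lemma eq_of_forall_le_add_one_of_sum_eq {ι : Type*} [Fintype ι] {s : ι → ℕ} {q : ℕ}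
    (hs : ∀ i j, s i ≤ s j + 1) (hsum : ∑ i, s i = Fintype.card ι * q) (i : ι) : s i = q := by
  refine le_antisymm (not_lt.1 fun hlt => ?_) (not_lt.1 fun hlt => ?_)
  · have : ∑ _j : ι, q < ∑ j, s j :=
      Finset.sum_lt_sum (fun j _ => by have := hs i j; omega) ⟨i, mem_univ i, hlt⟩
    simp [hsum] at this
  · have : ∑ j, s j < ∑ _j : ι, q :=
      Finset.sum_lt_sum (fun j _ => by have := hs j i; omega) ⟨i, mem_univ i, hlt⟩
    simp [hsum] at this

instance coronaType.isEmpty (α β : Type u) [IsEmpty α] : ∀ l, IsEmpty (coronaType α β l)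
  | 0 => inferInstanceAs (IsEmpty α)
  | l + 1 =>
    haveI := coronaType.isEmpty α β l
    inferInstanceAs (IsEmpty (coronaType α β l ⊕ coronaType α β l × β))

namespace SimpleGraph

lemma Colorable.exists_coloring_succ_forall_ne_zero {β : Type*} {H : SimpleGraph β} {m : ℕ}
    (hH : H.Colorable m) : ∃ d : H.Coloring (Fin (m + 1)), ∀ b, d b ≠ 0 := by
  obtain ⟨d⟩ := hH
  exact ⟨(Embedding.completeGraph (Fin.succEmb m)).toHom.comp d, fun b => Fin.succ_ne_zero _⟩

section Equitable

variable {V : Type*} [Fintype V] {G : SimpleGraph V} {k : ℕ}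

lemma IsEquitableColoring.card_filter_eq_of_dvd {c : V → Fin k} (hc : G.IsEquitableColoring c)
    (hdvd : k ∣ Fintype.card V) (i : Fin k) :
    #{v | c v = i} = Fintype.card V / k := by
  refine eq_of_forall_le_add_one_of_sum_eq hc.2 ?_ i
  rw [Fintype.card_fin, Nat.mul_div_cancel' hdvd, ← card_univ,
    card_eq_sum_card_fiberwise fun v _ => mem_univ (c v)]

lemma Coloring.isEquitableColoring_of_card_filter_eq (c : G.Coloring (Fin k)) {s : ℕ}
    (hs : ∀ i, #{v | c v = i} = s) : G.IsEquitableColoring c :=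
  ⟨fun _ _ h => c.valid h, fun i j => by rw [hs, hs]; omega⟩

lemma equitablyColorable_zero_of_isEmpty [IsEmpty V] (G : SimpleGraph V) :
    G.EquitablyColorable 0 :=
  ⟨isEmptyElim, fun u => isEmptyElim u, fun i => i.elim0⟩

lemma EquitablyColorable.equitableChromaticNumber_le (h : G.EquitablyColorable k) :
    G.equitableChromaticNumber ≤ k :=
  Nat.sInf_le h

end Equitable

section CoronaColoring

variable {V β A : Type u} {G : SimpleGraph V} {H : SimpleGraph β} [AddGroup A]
  (c : G.Coloring A) (d : H.Coloring A) (hd : ∀ b, d b ≠ 0)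

def Coloring.corona : (G.corona H).Coloring A :=
  Coloring.mk (fun | .inl v => c v | .inr (v, b) => c v + d b) <| by
    rintro (u | ⟨u, a⟩) (v | ⟨v, b⟩) h
    · exact c.valid h
    · obtain rfl : u = v := h
      simpa using hd b
    · obtain rfl : u = v := h
      simpa using hd a
    · obtain ⟨rfl, hab⟩ : u = v ∧ H.Adj a b := h
      simpa using d.valid hab

@[simp]
lemma Coloring.corona_inl (v : V) : c.corona d hd (.inl v) = c v :=
  rfl

@[simp]
lemma Coloring.corona_inr (v : V) (b : β) : c.corona d hd (.inr (v, b)) = c v + d b :=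
  rfl

def Coloring.coronaPow : ∀ l, (_root_.coronaPow G H l).Coloring A
  | 0 => c
  | l + 1 => (Coloring.coronaPow l).corona d hd

variable [Fintype V] [Fintype β] [DecidableEq A]

lemma Coloring.card_filter_corona {s : ℕ} (hc : ∀ a, #{v | c v = a} = s) (a : A) :
    #{x | c.corona d hd x = a} = (Fintype.card β + 1) * s := by
  calc #{x | c.corona d hd x = a}
      = #{v | c v = a} + ∑ b, #{v | c v = a - d b} := by
        simp only [card_filter, Fintype.sum_sum_type, Fintype.sum_prod_type_right, corona_inl,
          corona_inr, eq_sub_iff_add_eq]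
        -- `simp` leaves the decidability instances stated in terms of `c.corona d hd`
        rfl
    _ = (Fintype.card β + 1) * s := by
        simp only [hc, sum_const, card_univ, smul_eq_mul]
        ring

lemma Coloring.card_filter_coronaPow {s : ℕ} (hc : ∀ a, #{v | c v = a} = s) (l : ℕ) (a : A) :
    #{x | c.coronaPow d hd l x = a} = (Fintype.card β + 1) ^ l * s := by
  induction l generalizing a with
  | zero => rw [pow_zero, one_mul]; exact hc a
  | succ l ih =>
    rw [pow_succ', mul_assoc]
    exact (c.coronaPow d hd l).card_filter_corona d hd ih a

end CoronaColoring

end SimpleGraph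

theorem equitableChromaticNumber_coronaPow_multipartite_general
    {α β : Type} [Fintype α] [Fintype β] (G : SimpleGraph α) (H : SimpleGraph β)
    (k n l : ℕ) (hn : Fintype.card α = n) (hG : G.EquitablyColorable k) (hdvd : k ∣ n)
    (hH : H.Colorable (k - 1)) :
    (coronaPow G H l).equitableChromaticNumber ≤ k := by
  obtain ⟨c, hc⟩ := hG
  cases k with
  | zero =>
    have : IsEmpty α := Function.isEmpty c
    exact (equitablyColorable_zero_of_isEmpty _).equitableChromaticNumber_le
  | succ m =>
    obtain ⟨d, hd⟩ := Colorable.exists_coloring_succ_forall_ne_zero (m := m) hH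
    have hcard := hc.card_filter_eq_of_dvd (hn ▸ hdvd)
    let C := (Coloring.mk c fun h => hc.1 h).coronaPow d hd l
    exact EquitablyColorable.equitableChromaticNumber_le
      ⟨C, C.isEquitableColoring_of_card_filter_eq (Coloring.card_filter_coronaPow _ d hd hcard l)⟩

/-- If `G` is equitably `k`-colorable on `n` vertices with `k ∣ n`, and `H`
is `(k-1)`-partite, then `χ₌(G ∘^l H) ≤ k` for all `l ≥ 1`. -/
theorem equitableChromaticNumber_coronaPow_multipartite
    {α β : Type} [Fintype α] [Fintype β] (G : SimpleGraph α) (H : SimpleGraph β)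
    (k n l : ℕ) (hn : Fintype.card α = n) (hG : G.EquitablyColorable k) (hdvd : k ∣ n)
    (hH : H.Colorable (k - 1)) (hl : 1 ≤ l) :
    (coronaPow G H l).equitableChromaticNumber ≤ k :=
  equitableChromaticNumber_coronaPow_multipartite_general G H k n l hn hG hdvd hH
end

section
/- Let G be an equitably 3-colorable graph on n ≥ 2 vertices and let m ≥ 2 and l ≥ 2 be integers. If m = 4 or 3 divides n, then χ_=(G ∘^l P_m) = 3. -/
open SimpleGraph Finset

universe u

/-!
Hang a copy of `H` on a vertex `v` of colour `c v` (mod 3) and colour it with `c v + 1` and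
`c v + 2` along a bipartition of `H` with sides of sizes `p` and `q`. If the classes of `c` have
sizes `a₀, a₁, a₂`, the new class `i` has size `aᵢ + p aᵢ₋₂ + q aᵢ₋₁`. For `P₄` (`p = q = 2`)
this is `2n - aᵢ`, so equitability survives each corona step. If `3 ∣ n`, an equitable
3-colouring has all classes of size `n / 3`, and this balance survives the step for every `m`.
Three colours are necessary because a vertex and an edge of its copy of `P_m` form a triangle.
-/

theorem eq_of_forall_le_add_one_of_card_dvd_sum {ι : Type*} [Fintype ι] (a : ι → ℕ)
    (ha : ∀ i j, a i ≤ a j + 1) (hdvd : Fintype.card ι ∣ ∑ i, a i) (i j : ι) : a i = a j := by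
  by_contra hne
  wlog hlt : a i < a j generalizing i j
  · exact this j i (Ne.symm hne) (by omega)
  -- every value lies in `{a i, a i + 1}`, so the sum is `card ι * a i + N` with `0 < N < card ι`
  set N := #{t | a t = a i + 1}
  have hsum : ∑ t, a t = Fintype.card ι * a i + N := by
    have hstep : ∀ t, a t = a i + if a t = a i + 1 then 1 else 0 := by
      intro t
      have := ha i t
      have := ha j t
      have := ha t i
      split_ifs <;> omega
    rw [Finset.sum_congr rfl fun t _ => hstep t, Finset.sum_add_distrib, Finset.sum_boole]
    simp [N]
  have hpos : 0 < N := Finset.card_pos.2 ⟨j, by simp; have := ha j i; omega⟩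
  have hlt_card : N < Fintype.card ι := by
    simpa using Finset.card_lt_card (Finset.filter_ssubset.2 ⟨i, mem_univ _, by omega⟩)
  rw [hsum, Nat.dvd_add_right (dvd_mul_right _ _)] at hdvd
  exact absurd (Nat.le_of_dvd hpos hdvd) (by omega)

namespace SimpleGraph

variable {V α β : Type*}

theorem EquitablyColorable.colorable [Fintype V] {G : SimpleGraph V} {k : ℕ}
    (h : G.EquitablyColorable k) : G.Colorable k :=
  let ⟨c, hc, _⟩ := h
  ⟨Coloring.mk c fun h => hc h⟩

theorem equitableChromaticNumber_eq_of_forall_le [Fintype V] {G : SimpleGraph V} {k : ℕ}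
    (hk : G.EquitablyColorable k) (hmin : ∀ j, G.EquitablyColorable j → k ≤ j) :
    G.equitableChromaticNumber = k :=
  le_antisymm (Nat.sInf_le hk) (le_csInf ⟨k, hk⟩ hmin)

theorem corona_not_cliqueFree_three (G : SimpleGraph α) {H : SimpleGraph β} (v : α)
    {a b : β} (hab : H.Adj a b) : ¬ (G.corona H).CliqueFree 3 := by
  classical
  have htriangle : (G.corona H).IsNClique 3 {.inl v, .inr (v, a), .inr (v, b)} :=
    is3Clique_triple_iff.2 ⟨rfl, rfl, rfl, hab⟩
  exact fun h => h _ htriangle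

theorem three_le_of_equitablyColorable_corona [Fintype α] [Fintype β] (G : SimpleGraph α)
    {H : SimpleGraph β} (v : α) {a b : β} (hab : H.Adj a b) {k : ℕ}
    (hk : (G.corona H).EquitablyColorable k) : 3 ≤ k := by
  by_contra! hlt
  exact corona_not_cliqueFree_three G v hab (hk.colorable.cliqueFree hlt)

def coronaColoring (c : α → Fin 3) (b : β → Bool) : α ⊕ α × β → Fin 3
  | .inl v => c v
  | .inr (v, x) => c v + if b x then 2 else 1

theorem coronaColoring_ne_of_adj {G : SimpleGraph α} {H : SimpleGraph β} {c : α → Fin 3}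
    (hc : ∀ ⦃u v⦄, G.Adj u v → c u ≠ c v) (B : H.Coloring Bool) ⦃x y : α ⊕ α × β⦄
    (h : (G.corona H).Adj x y) : coronaColoring c B x ≠ coronaColoring c B y := by
  rcases x with u | ⟨u, a⟩ <;> rcases y with v | ⟨v, b⟩
  · exact hc h
  · obtain rfl : u = v := h
    simp only [coronaColoring]
    split <;> simp
  · obtain rfl : u = v := h
    simp only [coronaColoring]
    split <;> simp
  · obtain ⟨rfl, hab⟩ := h
    have := B.valid hab
    cases hBa : B a <;> cases hBb : B b <;> simp_all [coronaColoring]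

theorem card_coronaColoring_eq [Fintype α] [Fintype β] (c : α → Fin 3) (b : β → Bool)
    (i : Fin 3) :
    #{x | coronaColoring c b x = i} =
      #{v | c v = i} + #{x | b x = true} * #{v | c v = i - 2} +
        #{x | b x = false} * #{v | c v = i - 1} := by
  have hfiber : ∀ v, ∑ x, (if coronaColoring c b (.inr (v, x)) = i then 1 else 0) =
      #{x | b x = true} * (if c v = i - 2 then 1 else 0) +
        #{x | b x = false} * (if c v = i - 1 then 1 else 0) := by
    intro v
    rw [Finset.card_filter, Finset.card_filter, Finset.sum_mul, Finset.sum_mul,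
      ← Finset.sum_add_distrib]
    refine Finset.sum_congr rfl fun x _ => ?_
    cases hbx : b x <;> simp [coronaColoring, hbx, eq_sub_iff_add_eq]
  rw [Finset.card_filter, Fintype.sum_sum_type, Fintype.sum_prod_type,
    Finset.sum_congr rfl fun v _ => hfiber v, Finset.sum_add_distrib, ← Finset.mul_sum,
    ← Finset.mul_sum, ← Finset.card_filter, ← Finset.card_filter, ← Finset.card_filter,
    add_assoc]
  rfl

theorem card_add_card_sub_one_add_card_sub_two [Fintype α] (c : α → Fin 3) (i : Fin 3) :
    #{v | c v = i} + #{v | c v = i - 1} + #{v | c v = i - 2} = Fintype.card α := by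
  rw [← Finset.card_univ,
    Finset.card_eq_sum_card_fiberwise (s := univ) (f := c) (t := univ) (fun _ _ => mem_univ _),
    ← (Equiv.subLeft i).sum_comp, Fin.sum_univ_three]
  simp

def IsBalancedColoring [Fintype V] (G : SimpleGraph V) {k : ℕ} (c : V → Fin k) : Prop :=
  (∀ ⦃u v⦄, G.Adj u v → c u ≠ c v) ∧ ∀ i j : Fin k, #{v | c v = i} = #{v | c v = j}

theorem IsBalancedColoring.isEquitableColoring [Fintype V] {G : SimpleGraph V} {k : ℕ}
    {c : V → Fin k} (hc : G.IsBalancedColoring c) : G.IsEquitableColoring c :=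
  ⟨hc.1, fun i j => (hc.2 i j).trans_le (Nat.le_succ _)⟩

theorem IsEquitableColoring.isBalancedColoring [Fintype V] {G : SimpleGraph V} {k : ℕ}
    {c : V → Fin k} (hc : G.IsEquitableColoring c) (hk : k ∣ Fintype.card V) :
    G.IsBalancedColoring c := by
  refine ⟨hc.1, eq_of_forall_le_add_one_of_card_dvd_sum (fun i => #{v | c v = i}) hc.2 ?_⟩
  convert hk using 1
  · exact Fintype.card_fin k
  · exact (Finset.card_eq_sum_card_fiberwise (f := c) (t := univ) fun _ _ => mem_univ _).symm

theorem IsEquitableColoring.corona [Fintype α] [Fintype β] {G : SimpleGraph α}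
    {H : SimpleGraph β} {c : α → Fin 3} (hc : G.IsEquitableColoring c) (B : H.Coloring Bool)
    (hB : #{x | B x = true} = #{x | B x = false}) (hB₂ : #{x | B x = true} ≤ 2) :
    (G.corona H).IsEquitableColoring (coronaColoring c B) := by
  refine ⟨coronaColoring_ne_of_adj hc.1 B, fun i j => ?_⟩
  have hi := card_add_card_sub_one_add_card_sub_two c i
  have hj := card_add_card_sub_one_add_card_sub_two c j
  have hij := hc.2 i j
  have hji := hc.2 j i
  rw [card_coronaColoring_eq, card_coronaColoring_eq, ← hB]
  interval_cases #{x | B x = true} <;> omega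

theorem IsBalancedColoring.corona [Fintype α] [Fintype β] {G : SimpleGraph α}
    {H : SimpleGraph β} {c : α → Fin 3} (hc : G.IsBalancedColoring c) (B : H.Coloring Bool) :
    (G.corona H).IsBalancedColoring (coronaColoring c B) := by
  refine ⟨coronaColoring_ne_of_adj hc.1 B, fun i j => ?_⟩
  rw [card_coronaColoring_eq, card_coronaColoring_eq, hc.2 i 0, hc.2 (i - 2) 0, hc.2 (i - 1) 0,
    hc.2 j 0, hc.2 (j - 2) 0, hc.2 (j - 1) 0]

theorem EquitablyColorable.coronaPow {α β : Type u} [Fintype α] [Fintype β]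
    {G : SimpleGraph α} {H : SimpleGraph β} (hG : G.EquitablyColorable 3) (B : H.Coloring Bool)
    (hB : #{x | B x = true} = #{x | B x = false}) (hB₂ : #{x | B x = true} ≤ 2) :
    ∀ l, (coronaPow G H l).EquitablyColorable 3
  | 0 => hG
  | l + 1 =>
    let ⟨_, hc⟩ := hG.coronaPow B hB hB₂ l
    ⟨_, hc.corona B hB hB₂⟩

theorem IsBalancedColoring.exists_coronaPow {α β : Type u} [Fintype α] [Fintype β]
    {G : SimpleGraph α} {H : SimpleGraph β} {c : α → Fin 3} (hc : G.IsBalancedColoring c)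
    (B : H.Coloring Bool) :
    ∀ l, ∃ c' : coronaType α β l → Fin 3, (coronaPow G H l).IsBalancedColoring c'
  | 0 => ⟨c, hc⟩
  | l + 1 =>
    let ⟨_, hc'⟩ := hc.exists_coronaPow B l
    ⟨_, hc'.corona B⟩

end SimpleGraph

/-- If `G` is equitably 3-colorable on `n ≥ 2` vertices, `m ≥ 2`, `l ≥ 2`,
and `m = 4` or `3 ∣ n`, then `χ₌(G ∘^l P_m) = 3`. -/
theorem equitableChromaticNumber_coronaPow_path_eq_three
    {α : Type} [Fintype α] (G : SimpleGraph α) (n m l : ℕ)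
    (hn : Fintype.card α = n) (hn2 : 2 ≤ n) (hG : G.EquitablyColorable 3)
    (hm : 2 ≤ m) (hl : 2 ≤ l) (h : m = 4 ∨ 3 ∣ n) :
    (coronaPow G (pathGraph m) l).equitableChromaticNumber = 3 := by
  obtain ⟨l, rfl⟩ : ∃ l', l = l' + 1 := ⟨l - 1, by omega⟩
  obtain ⟨a⟩ : Nonempty α := Fintype.card_pos_iff.1 (by omega)
  have hup : (coronaPow G (pathGraph m) (l + 1)).EquitablyColorable 3 := by
    rcases h with rfl | hdvd
    · exact hG.coronaPow (pathGraph.bicoloring 4) (by decide) (by decide) _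
    · obtain ⟨c, hc⟩ := hG
      obtain ⟨c', hc'⟩ :=
        (hc.isBalancedColoring (hn ▸ hdvd)).exists_coronaPow (pathGraph.bicoloring m) (l + 1)
      exact ⟨c', hc'.isEquitableColoring⟩
  refine equitableChromaticNumber_eq_of_forall_le hup fun k hk => ?_
  have hadj : (pathGraph m).Adj ⟨0, by omega⟩ ⟨1, by omega⟩ := by simp [pathGraph_adj]
  exact three_le_of_equitablyColorable_corona _ (coronaBase _ l a) hadj hk
end
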